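/- For odd k ≥ 3, the polynomial A(x) = x^k - x^{k-1} - ... - 1 has exactly one real root (which is positive); for even k ≥ 2, A(x) has exactly two real roots, one positive and one negative. -/

import Mathlib

/-!
Multiplying by `x - 1` turns `A(x) = x^k - ∑_{j<k} x^j` into `B(x) = x^k (x - 2) + 1`, and `A(1) = 1 - k ≠ 0`,
so away from `1` the real roots of `A` are those of `B`.

For `x > 0`, `A(x) = 0` says `∑_{j<k} x^(j-k) = 1`, and the left side is strictly decreasing in `x`; since
`A(1) < 0 < A(2)` there is exactly one positive root. For `x ≤ 0`, `B(x) ≥ 1` when `k` is odd, while for `k` even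
`B` is strictly increasing on `(-∞, 0]` with `B(-1) = -2 < 1 = B(0)`, giving exactly one negative root.
-/

open Polynomial Finset Set

section CommRing

variable {R : Type*} [CommRing R]

theorem isRoot_X_pow_sub_geom_sum_iff (k : ℕ) (x : R) :
    ((X : R[X]) ^ k - ∑ j ∈ range k, X ^ j).IsRoot x ↔ x ^ k = ∑ j ∈ range k, x ^ j := by
  simp [sub_eq_zero]

theorem pow_sub_geom_sum_mul_sub_one (k : ℕ) (x : R) :
    (x ^ k - ∑ j ∈ range k, x ^ j) * (x - 1) = x ^ k * (x - 2) + 1 := by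
  rw [sub_mul, geom_sum_mul]
  ring

theorem pow_eq_geom_sum_iff [IsDomain R] (k : ℕ) {x : R} (hx : x ≠ 1) :
    x ^ k = ∑ j ∈ range k, x ^ j ↔ x ^ k * (x - 2) + 1 = 0 := by
  rw [← sub_eq_zero, ← pow_sub_geom_sum_mul_sub_one, mul_eq_zero, sub_eq_zero (a := x)]
  simp [hx]

end CommRing

section OrderedField

variable {K : Type*} [Field K] [LinearOrder K] [IsStrictOrderedRing K]

theorem strictAntiOn_geom_sum_div_pow {k : ℕ} (hk : k ≠ 0) :
    StrictAntiOn (fun x : K => (∑ j ∈ range k, x ^ j) / x ^ k) (Ioi 0) := by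
  have hreflect : ∀ x : K, 0 < x →
      (∑ j ∈ range k, x ^ j) / x ^ k = ∑ j ∈ range k, x⁻¹ ^ (k - j) := by
    intro x hx
    rw [sum_div]
    refine sum_congr rfl fun j hj => ?_
    rw [inv_pow, pow_sub₀ x hx.ne' (mem_range.1 hj).le, mul_inv, inv_inv, div_eq_mul_inv, mul_comm]
  intro x hx y hy hxy
  simp only [hreflect x hx, hreflect y hy]
  refine sum_lt_sum_of_nonempty (nonempty_range_iff.2 hk) fun j hj => ?_
  exact pow_lt_pow_left₀ ((inv_lt_inv₀ hy hx).2 hxy) (inv_pos.2 hy).le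
    (Nat.sub_ne_zero_of_lt (mem_range.1 hj))

theorem eq_of_pos_of_pow_eq_geom_sum {k : ℕ} (hk : k ≠ 0) {x y : K} (hx : 0 < x) (hy : 0 < y)
    (hxk : x ^ k = ∑ j ∈ range k, x ^ j) (hyk : y ^ k = ∑ j ∈ range k, y ^ j) : x = y :=
  (strictAntiOn_geom_sum_div_pow hk).injOn hx hy <| by
    simp only [← hxk, ← hyk, div_self (pow_ne_zero k hx.ne'), div_self (pow_ne_zero k hy.ne')]

theorem pow_mul_sub_two_add_one_pos {k : ℕ} (hk : Odd k) {x : K} (hx : x ≤ 0) :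
    0 < x ^ k * (x - 2) + 1 := by
  have : 0 ≤ x ^ k * (x - 2) := mul_nonneg_of_nonpos_of_nonpos (hk.pow_nonpos hx) (by linarith)
  linarith

theorem strictMonoOn_pow_mul_sub_two_add_one {k : ℕ} (hk : Even k) :
    StrictMonoOn (fun x : K => x ^ k * (x - 2) + 1) (Iic 0) := by
  intro x hx y hy hxy
  have hy0 : y ≤ 0 := hy
  have habs : |y| ≤ |x| := by
    rw [abs_of_nonpos hx, abs_of_nonpos hy0]
    linarith
  have : |y| ^ k * (2 - y) < |x| ^ k * (2 - x) :=
    mul_lt_mul_of_le_of_lt_of_nonneg_of_pos (pow_le_pow_left₀ (abs_nonneg y) habs k)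
      (by linarith) (by linarith) (pow_pos (abs_pos.2 (hxy.trans_le hy0).ne) k)
  rw [hk.pow_abs, hk.pow_abs] at this
  linarith

end OrderedField

theorem exists_one_lt_pow_eq_geom_sum {k : ℕ} (hk : 2 ≤ k) :
    ∃ x : ℝ, 1 < x ∧ x ^ k = ∑ j ∈ range k, x ^ j := by
  set A : ℝ → ℝ := fun x => x ^ k - ∑ j ∈ range k, x ^ j
  have hA1 : A 1 < 0 := by
    simp only [A, one_pow, sum_const, card_range, nsmul_eq_mul, mul_one, sub_neg]
    exact_mod_cast hk
  have hA2 : A 2 = 1 := by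
    have h := pow_sub_geom_sum_mul_sub_one k (2 : ℝ)
    norm_num at h
    exact h
  obtain ⟨x, hx, hAx⟩ := intermediate_value_Ioo one_le_two (by fun_prop : Continuous A).continuousOn
    (show (0 : ℝ) ∈ Ioo (A 1) (A 2) by simp [hA1, hA2])
  exact ⟨x, hx.1, sub_eq_zero.1 hAx⟩

theorem exists_neg_pow_mul_sub_two_add_one_eq_zero {k : ℕ} (hk0 : k ≠ 0) (hk : Even k) :
    ∃ x : ℝ, x < 0 ∧ x ^ k * (x - 2) + 1 = 0 := by
  set B : ℝ → ℝ := fun x => x ^ k * (x - 2) + 1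
  have hB : (0 : ℝ) ∈ Ioo (B (-1)) (B 0) := by
    simp only [B, hk.neg_one_pow, zero_pow hk0]
    norm_num
  obtain ⟨x, hx, hBx⟩ := intermediate_value_Ioo (by norm_num) (by fun_prop : Continuous B).continuousOn hB
  exact ⟨x, hx.2, hBx⟩

theorem stmt_6 (k : ℕ) (hk : 2 ≤ k) :
    (Odd k → ∃ x : ℝ, 0 < x ∧ ((X : Polynomial ℝ) ^ k - ∑ j ∈ range k, X ^ j).IsRoot x ∧
        ∀ y : ℝ, ((X : Polynomial ℝ) ^ k - ∑ j ∈ range k, X ^ j).IsRoot y → y = x) ∧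
    (Even k → ∃ x y : ℝ, 0 < x ∧ y < 0 ∧
        ((X : Polynomial ℝ) ^ k - ∑ j ∈ range k, X ^ j).IsRoot x ∧
        ((X : Polynomial ℝ) ^ k - ∑ j ∈ range k, X ^ j).IsRoot y ∧
        ∀ z : ℝ, ((X : Polynomial ℝ) ^ k - ∑ j ∈ range k, X ^ j).IsRoot z → z = x ∨ z = y) := by
  have hk0 : k ≠ 0 := by omega
  simp only [isRoot_X_pow_sub_geom_sum_iff]
  obtain ⟨a, ha1, ha⟩ := exists_one_lt_pow_eq_geom_sum hk
  have ha0 : 0 < a := by linarith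
  have hne_one : ∀ z : ℝ, z ≤ 0 → z ≠ 1 := fun z hz h => by linarith
  refine ⟨fun hodd => ⟨a, ha0, ha, fun y hy => ?_⟩, fun heven => ?_⟩
  · rcases le_or_gt y 0 with hy0 | hy0
    · exact absurd ((pow_eq_geom_sum_iff k (hne_one y hy0)).1 hy)
        (pow_mul_sub_two_add_one_pos hodd hy0).ne'
    · exact eq_of_pos_of_pow_eq_geom_sum hk0 hy0 ha0 hy ha
  · obtain ⟨b, hb0, hb⟩ := exists_neg_pow_mul_sub_two_add_one_eq_zero hk0 heven
    refine ⟨a, b, ha0, hb0, ha, (pow_eq_geom_sum_iff k (hne_one b hb0.le)).2 hb, fun z hz => ?_⟩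
    rcases le_or_gt z 0 with hz0 | hz0
    · exact .inr <| (strictMonoOn_pow_mul_sub_two_add_one heven).injOn hz0 hb0.le
        (((pow_eq_geom_sum_iff k (hne_one z hz0)).1 hz).trans hb.symm)
    · exact .inl <| eq_of_pos_of_pow_eq_geom_sum hk0 hz0 ha0 hz ha
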